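/- arXiv:1704.04007 — 5 statements merged into one kernel-verified Lean document; each statement's English description precedes it below -/
import Mathlib

section
/- Let M = (ρ, E) be an (n,k,d,r,δ)_i-matroid with r ≥ 1 and δ ≥ 2. Then d ≤ n − k + 1 − (⌈k/r⌉ − 1)(δ − 1). -/
/-- A matroid given by an integer-valued rank function on subsets of a finite ground set. -/
structure RankMatroid (α : Type) [DecidableEq α] where
  E : Finset α
  rk : Finset α → ℤ
  rk_nonneg : ∀ X : Finset α, X ⊆ E → 0 ≤ rk X
  rk_le_card : ∀ X : Finset α, X ⊆ E → rk X ≤ X.card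
  rk_mono : ∀ X Y : Finset α, X ⊆ Y → Y ⊆ E → rk X ≤ rk Y
  rk_submod : ∀ X Y : Finset α, X ⊆ E → Y ⊆ E → rk (X ∪ Y) + rk (X ∩ Y) ≤ rk X + rk Y

namespace RankMatroid

variable {α : Type} [DecidableEq α]

/-- The minimum distance `d_X` of the restriction to `X`:
`d_X = min {|Y| : Y ⊆ X, ρ(X \ Y) < ρ(X)}`. -/
noncomputable def dist (M : RankMatroid α) (X : Finset α) : ℕ :=
  sInf {m : ℕ | ∃ Y : Finset α, Y ⊆ X ∧ Y.card = m ∧ M.rk (X \ Y) < M.rk X}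

/-- Closure: `cl(X) = {y ∈ E : ρ(X ∪ {y}) = ρ(X)}`. -/
def cl (M : RankMatroid α) (X : Finset α) : Finset α :=
  M.E.filter fun y => M.rk (insert y X) = M.rk X

/-- `X` is cyclic if `ρ(X \ {x}) = ρ(X)` for every `x ∈ X`. -/
def Cyclic (M : RankMatroid α) (X : Finset α) : Prop :=
  ∀ x ∈ X, M.rk (X.erase x) = M.rk X

/-- Cyclic core: `cyc(X) = {x ∈ X : ρ(X \ {x}) = ρ(X)}`. -/
def cyc (M : RankMatroid α) (X : Finset α) : Finset α :=
  X.filter fun x => M.rk (X.erase x) = M.rk X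

/-- A cyclic flat is a set which is both cyclic and a flat. -/
def IsCyclicFlat (M : RankMatroid α) (X : Finset α) : Prop :=
  X ⊆ M.E ∧ M.Cyclic X ∧ M.cl X = X

/-- `Z(M)`: the collection of cyclic flats of `M`. -/
def Z (M : RankMatroid α) : Set (Finset α) := {X | M.IsCyclicFlat X}

/-- `M` is non-degenerate: every singleton has rank at least one and `d ≥ 2`. -/
def NonDegenerate (M : RankMatroid α) : Prop :=
  (∀ x ∈ M.E, 1 ≤ M.rk {x}) ∧ 2 ≤ M.dist M.E

/-- `R` is a repair set for `x` with parameters `(r, δ)`. -/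
def IsRepairSet (M : RankMatroid α) (r δ : ℤ) (x : α) (R : Finset α) : Prop :=
  R ⊆ M.E ∧ x ∈ R ∧ (R.card : ℤ) ≤ r + δ - 1 ∧ δ ≤ (M.dist R : ℤ)

/-- The collection of cyclic flats of the restriction `M|X`. -/
def ZIn (M : RankMatroid α) (X : Finset α) : Set (Finset α) :=
  {Y | Y ⊆ X ∧ M.Cyclic Y ∧ X.filter (fun z => M.rk (insert z Y) = M.rk Y) = Y}

/-- `FX` is the meet, in the lattice `(Z(M), ⊆)`, of all cyclic flats containing `X`. -/
def IsMeetOfFlatsContaining (M : RankMatroid α) (X FX : Finset α) : Prop :=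
  FX ∈ M.Z ∧ (∀ F ∈ M.Z, X ⊆ F → FX ⊆ F) ∧
    ∀ W ∈ M.Z, (∀ F ∈ M.Z, X ⊆ F → W ⊆ F) → W ⊆ FX

end RankMatroid

/-! Grow a set `S` from `∅` by repeatedly adjoining a repair set `R` of a basis element outside
the closure of `S`. Deleting `δ - 1` elements of `R` keeps its rank, so `ρ(R) ≤ r`: each step
raises the rank of `S` by at most `r` and its nullity `|S| - ρ(S)` by at least `δ - 1`. After
`⌈k/r⌉ - 1` steps `ρ(S) < k`; extending `S` to a set `H` of rank `k - 1` does not lower the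
nullity, and `d ≤ |E \ H| = n - k + 1 - (|H| - ρ(H))`. -/

namespace RankMatroid

variable {α : Type} [DecidableEq α] (M : RankMatroid α)

def nullity (X : Finset α) : ℤ := X.card - M.rk X

lemma rk_empty : M.rk ∅ = 0 :=
  le_antisymm (by simpa using M.rk_le_card ∅ (Finset.empty_subset _))
    (M.rk_nonneg ∅ (Finset.empty_subset _))

variable {M}

lemma rk_union_le_add {A C : Finset α} (hA : A ⊆ M.E) (hC : C ⊆ M.E) :
    M.rk (A ∪ C) ≤ M.rk A + M.rk C := by
  have := M.rk_submod A C hA hC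
  have := M.rk_nonneg (A ∩ C) (Finset.inter_subset_left.trans hA)
  linarith

lemma rk_union_le_add_card_sdiff {A C : Finset α} (hA : A ⊆ M.E) (hC : C ⊆ M.E) :
    M.rk (A ∪ C) ≤ M.rk A + (C \ A).card := by
  have hCA : C \ A ⊆ M.E := Finset.sdiff_subset.trans hC
  have := rk_union_le_add hA hCA
  have := M.rk_le_card _ hCA
  rw [Finset.union_sdiff_self_eq_union] at *
  linarith

lemma rk_insert_le {a : α} {X : Finset α} (ha : a ∈ M.E) (hX : X ⊆ M.E) :
    M.rk (insert a X) ≤ M.rk X + 1 := by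
  have := rk_union_le_add_card_sdiff hX (Finset.singleton_subset_iff.mpr ha)
  have : (({a} : Finset α) \ X).card ≤ 1 :=
    (Finset.card_le_card Finset.sdiff_subset).trans_eq (Finset.card_singleton a)
  rw [Finset.union_comm, ← Finset.insert_eq] at *
  omega

/-- In terms of closures: `D ⊆ cl(A)` and `A ⊆ C` give `D ⊆ cl(C)`. -/
lemma rk_union_eq_of_subset {A C D : Finset α} (hC : C ⊆ M.E) (hD : D ⊆ M.E) (hAC : A ⊆ C)
    (hAD : M.rk (A ∪ D) = M.rk A) : M.rk (C ∪ D) = M.rk C := by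
  have hA := hAC.trans hC
  have hsub := M.rk_submod C (A ∪ D) hC (Finset.union_subset hA hD)
  rw [← Finset.union_assoc, Finset.union_eq_left.mpr hAC, hAD] at hsub
  have := M.rk_mono A (C ∩ (A ∪ D)) (Finset.subset_inter hAC Finset.subset_union_left)
    (Finset.inter_subset_left.trans hC)
  exact le_antisymm (by linarith)
    (M.rk_mono _ _ Finset.subset_union_left (Finset.union_subset hC hD))

lemma rk_union_eq_of_forall_rk_insert_eq {S B : Finset α} (hS : S ⊆ M.E) (hB : B ⊆ M.E)
    (h : ∀ b ∈ B, M.rk (insert b S) = M.rk S) : M.rk (S ∪ B) = M.rk S := by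
  induction B using Finset.induction_on with
  | empty => simp
  | @insert a B _ ih =>
    have hBE : B ⊆ M.E := (Finset.subset_insert _ _).trans hB
    have ha : M.rk (S ∪ {a}) = M.rk S := by
      rw [Finset.union_comm, ← Finset.insert_eq]
      exact h a (Finset.mem_insert_self _ _)
    have := rk_union_eq_of_subset (Finset.union_subset hS hBE)
      (Finset.singleton_subset_iff.mpr (hB (Finset.mem_insert_self _ _)))
      Finset.subset_union_left ha
    rw [Finset.union_insert, Finset.insert_eq, Finset.union_comm, this,
      ih hBE fun b hb ↦ h b (Finset.mem_insert_of_mem hb)]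

lemma exists_rk_lt_rk_insert {S B : Finset α} (hS : S ⊆ M.E) (hB : B ⊆ M.E)
    (hlt : M.rk S < M.rk B) : ∃ b ∈ B, M.rk S < M.rk (insert b S) := by
  by_contra! h
  have := rk_union_eq_of_forall_rk_insert_eq hS hB fun b hb ↦ le_antisymm (h b hb)
    (M.rk_mono _ _ (Finset.subset_insert _ _) (Finset.insert_subset (hB hb) hS))
  have := M.rk_mono B (S ∪ B) Finset.subset_union_right (Finset.union_subset hS hB)
  omega

lemma rk_sdiff_eq_of_card_lt_dist {R T : Finset α} (hR : R ⊆ M.E) (hTR : T ⊆ R)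
    (hT : T.card < M.dist R) : M.rk (R \ T) = M.rk R := by
  refine le_antisymm (M.rk_mono _ _ Finset.sdiff_subset hR) (not_lt.mp fun hlt ↦ ?_)
  exact hT.not_ge (Nat.sInf_le ⟨T, hTR, rfl, hlt⟩)

lemma rk_union_sdiff_eq_of_card_lt_dist {S R T : Finset α} (hS : S ⊆ M.E) (hR : R ⊆ M.E)
    (hTR : T ⊆ R) (hT : T.card < M.dist R) : M.rk (S ∪ (R \ T)) = M.rk (S ∪ R) := by
  have hRT : M.rk ((R \ T) ∪ T) = M.rk (R \ T) := by
    rw [Finset.sdiff_union_of_subset hTR, rk_sdiff_eq_of_card_lt_dist hR hTR hT]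
  have := rk_union_eq_of_subset (Finset.union_subset hS (Finset.sdiff_subset.trans hR))
    (hTR.trans hR) Finset.subset_union_right hRT
  rwa [Finset.union_assoc, Finset.sdiff_union_of_subset hTR, eq_comm] at this

lemma dist_le_card {X : Finset α} (hX : X ⊆ M.E) : M.dist X ≤ X.card := by
  by_cases hpos : 0 < M.rk X
  · exact Nat.sInf_le ⟨X, subset_rfl, rfl, by simpa [rk_empty] using hpos⟩
  · have hempty : {m : ℕ | ∃ Y ⊆ X, Y.card = m ∧ M.rk (X \ Y) < M.rk X} = ∅ :=
      Set.eq_empty_iff_forall_notMem.mpr fun _ ⟨Y, _, _, hY⟩ ↦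
        hpos (hY.trans_le' (M.rk_nonneg _ (Finset.sdiff_subset.trans hX)))
    simp only [dist, hempty, Nat.sInf_empty, zero_le]

lemma dist_le_card_sdiff {X : Finset α} (hX : X ⊆ M.E) (hlt : M.rk X < M.rk M.E) :
    M.dist M.E ≤ (M.E \ X).card :=
  Nat.sInf_le ⟨M.E \ X, Finset.sdiff_subset, rfl, by rwa [Finset.sdiff_sdiff_eq_self hX]⟩

lemma nullity_mono {X Y : Finset α} (hXY : X ⊆ Y) (hY : Y ⊆ M.E) :
    M.nullity X ≤ M.nullity Y := by
  have := rk_union_le_add_card_sdiff (hXY.trans hY) hY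
  have := Finset.card_sdiff_add_card_eq_card hXY
  rw [Finset.union_eq_right.mpr hXY] at *
  simp only [nullity]
  omega

/-- Removing `m` elements of `R \ S` does not change the rank of `S ∪ R`, while a rank increase
rules out `|R \ S| ≤ m`. -/
lemma nullity_add_le_nullity_union {S R : Finset α} {m : ℕ} (hS : S ⊆ M.E) (hR : R ⊆ M.E)
    (hm : m < M.dist R) (hup : M.rk S < M.rk (S ∪ R)) :
    M.nullity S + m ≤ M.nullity (S ∪ R) := by
  obtain hsmall | hlarge := le_or_gt (R \ S).card m
  · have := rk_union_sdiff_eq_of_card_lt_dist hS hR Finset.sdiff_subset (hsmall.trans_lt hm)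
    rw [Finset.sdiff_sdiff_self_left, Finset.union_eq_left.mpr Finset.inter_subset_right] at this
    omega
  · obtain ⟨T, hT, hTcard⟩ := Finset.exists_subset_card_eq hlarge.le
    have hTR : T ⊆ R := hT.trans Finset.sdiff_subset
    have hrk := rk_union_sdiff_eq_of_card_lt_dist hS hR hTR (hTcard ▸ hm)
    have := rk_union_le_add_card_sdiff hS (Finset.sdiff_subset.trans hR) (C := R \ T)
    rw [hrk, sdiff_right_comm, Finset.card_sdiff_of_subset hT, hTcard] at this
    have hcard := Finset.card_sdiff_add_card R S
    rw [Finset.union_comm] at hcard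
    have := Finset.card_le_card hT
    simp only [nullity]
    omega

lemma rk_le_of_isRepairSet {r δ : ℤ} {x : α} {R : Finset α} (hr : 0 ≤ r) (hδ : 1 ≤ δ)
    (hR : M.IsRepairSet r δ x R) : M.rk R ≤ r := by
  obtain ⟨hRE, -, hcard, hdist⟩ := hR
  by_cases hpos : M.rk R ≤ 0
  · exact hpos.trans hr
  have := nullity_add_le_nullity_union (m := (δ - 1).toNat) (Finset.empty_subset M.E) hRE
    (by omega) (by simpa [rk_empty] using hpos)
  simp only [nullity, Finset.empty_union, Finset.card_empty, rk_empty] at this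
  omega

lemma exists_rk_le_mul_le_nullity {r δ : ℤ} {B : Finset α} (hr : 0 ≤ r) (hδ : 1 ≤ δ)
    (hB : B ⊆ M.E) (hrep : ∀ x ∈ B, ∃ R, M.IsRepairSet r δ x R) :
    ∀ i : ℕ, i * r < M.rk B → ∃ S ⊆ M.E, M.rk S ≤ i * r ∧ i * (δ - 1) ≤ M.nullity S
  | 0, _ => ⟨∅, Finset.empty_subset _, by simp [rk_empty], by simp [nullity, rk_empty]⟩
  | i + 1, hi => by
    obtain ⟨S, hS, hSrk, hSnull⟩ := exists_rk_le_mul_le_nullity hr hδ hB hrep i (by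
      push_cast at hi; linarith)
    obtain ⟨b, hb, hSb⟩ := exists_rk_lt_rk_insert hS hB (by push_cast at hi; nlinarith)
    obtain ⟨R, hRrep⟩ := hrep b hb
    have hRE := hRrep.1
    have hSR : S ∪ R ⊆ M.E := Finset.union_subset hS hRE
    have hup : M.rk S < M.rk (S ∪ R) := hSb.trans_le (M.rk_mono _ _
      (Finset.insert_subset (Finset.mem_union_right _ hRrep.2.1) Finset.subset_union_left) hSR)
    have hnull := nullity_add_le_nullity_union (m := (δ - 1).toNat) hS hRE
      (by have := hRrep.2.2.2; omega) hup
    refine ⟨S ∪ R, hSR, ?_, ?_⟩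
    · have := rk_union_le_add hS hRE
      have := rk_le_of_isRepairSet hr hδ hRrep
      push_cast
      linarith
    · rw [Int.toNat_of_nonneg (by omega)] at hnull
      push_cast
      linarith

lemma exists_subset_superset_rk_eq {X : Finset α} {m : ℤ} (hX : X ⊆ M.E) (hm : M.rk X ≤ m) :
    ∀ D ⊆ M.E, m ≤ M.rk (X ∪ D) → ∃ H, X ⊆ H ∧ H ⊆ X ∪ D ∧ M.rk H = m := by
  intro D
  induction D using Finset.induction_on with
  | empty => exact fun _ h ↦ ⟨X, subset_rfl, Finset.subset_union_left,
      le_antisymm hm (by simpa using h)⟩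
  | @insert a D _ ih =>
    intro hD hmD
    have hDE : D ⊆ M.E := (Finset.subset_insert _ _).trans hD
    by_cases hle : m ≤ M.rk (X ∪ D)
    · obtain ⟨H, hXH, hHD, hH⟩ := ih hDE hle
      exact ⟨H, hXH, hHD.trans (Finset.union_subset_union_right (Finset.subset_insert _ _)), hH⟩
    · refine ⟨X ∪ insert a D, Finset.subset_union_left, subset_rfl, le_antisymm ?_ hmD⟩
      have := rk_insert_le (hD (Finset.mem_insert_self a D)) (Finset.union_subset hX hDE)
      rw [Finset.union_insert]
      omega

lemma dist_le_of_rk_lt {X : Finset α} (hX : X ⊆ M.E) (hlt : M.rk X < M.rk M.E) :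
    (M.dist M.E : ℤ) ≤ M.E.card - M.rk M.E + 1 - M.nullity X := by
  obtain ⟨H, hXH, hHE, hH⟩ := exists_subset_superset_rk_eq (m := M.rk M.E - 1) hX (by omega)
    M.E subset_rfl (by rw [Finset.union_eq_right.mpr hX]; omega)
  rw [Finset.union_eq_right.mpr hX] at hHE
  have := dist_le_card_sdiff hHE (by omega)
  have := Finset.card_sdiff_add_card_eq_card hHE
  have := nullity_mono hXH hHE
  simp only [nullity] at *
  omega

end RankMatroid

lemma Int.ceil_div_sub_one_mul_lt {k r : ℤ} (hr : 0 < r) : (⌈(k : ℚ) / r⌉ - 1) * r < k := by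
  have h := Int.ceil_lt_add_one ((k : ℚ) / r)
  rw [← sub_lt_iff_lt_add, lt_div_iff₀ (by exact_mod_cast hr)] at h
  exact_mod_cast h

open RankMatroid in
theorem stmt0_general {α : Type} [DecidableEq α] (M : RankMatroid α) (r δ : ℤ)
    (hr : 1 ≤ r) (hδ : 2 ≤ δ)
    (B : Finset α) (hBE : B ⊆ M.E) (hBind : M.rk B = (B.card : ℤ))
    (hBk : (B.card : ℤ) = M.rk M.E)
    (hrep : ∀ x ∈ B, ∃ R : Finset α, M.IsRepairSet r δ x R) :
    (M.dist M.E : ℤ) ≤ (M.E.card : ℤ) - M.rk M.E + 1 -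
      (⌈(M.rk M.E : ℚ) / (r : ℚ)⌉ - 1) * (δ - 1) := by
  obtain hk | hk := (M.rk_nonneg M.E subset_rfl).eq_or_lt
  · -- for `k = 0` the correction term is `-(δ - 1)`, so `d ≤ n` suffices
    have := dist_le_card (M := M) subset_rfl
    rw [← hk]
    simp only [Int.cast_zero, zero_div, Int.ceil_zero]
    omega
  set t := ⌈(M.rk M.E : ℚ) / r⌉ - 1
  have ht : 0 ≤ t := by
    have : 0 < ⌈(M.rk M.E : ℚ) / r⌉ := Int.ceil_pos.mpr (by positivity)
    omega
  have htr : t * r < M.rk M.E := Int.ceil_div_sub_one_mul_lt (by omega)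
  obtain ⟨S, hS, hSrk, hSnull⟩ := exists_rk_le_mul_le_nullity (by omega) (by omega) hBE hrep
    t.toNat (by rwa [Int.toNat_of_nonneg ht, hBind, hBk])
  rw [Int.toNat_of_nonneg ht] at hSrk hSnull
  have := dist_le_of_rk_lt hS (hSrk.trans_lt htr)
  omega

/-- Singleton-type bound for `(n,k,d,r,δ)_i`-matroids:
`d ≤ n − k + 1 − (⌈k/r⌉ − 1)(δ − 1)`. -/
theorem stmt0 {α : Type} [DecidableEq α] (M : RankMatroid α) (r δ : ℤ)
    (hr : 1 ≤ r) (hδ : 2 ≤ δ) (hM : M.NonDegenerate)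
    (B : Finset α) (hBE : B ⊆ M.E) (hBind : M.rk B = (B.card : ℤ))
    (hBk : (B.card : ℤ) = M.rk M.E)
    (hrep : ∀ x ∈ B, ∃ R : Finset α, M.IsRepairSet r δ x R) :
    (M.dist M.E : ℤ) ≤ (M.E.card : ℤ) - M.rk M.E + 1 -
      (⌈(M.rk M.E : ℚ) / (r : ℚ)⌉ - 1) * (δ - 1) :=
  stmt0_general M r δ hr hδ B hBE hBind hBk hrep
end

section
/- Let M = (ρ, E) be an (n,k,d,r,δ)_i-matroid with r ≥ 1 and δ ≥ 2. Then d ≥ δ. -/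
lemma rk_union_eq_of_inserts {α : Type} [DecidableEq α] (M : RankMatroid α)
    (A : Finset α) (hA : A ⊆ M.E) :
    ∀ B : Finset α, B ⊆ M.E → (∀ x ∈ B, M.rk (insert x A) = M.rk A) →
      M.rk (A ∪ B) = M.rk A := by
  intro B
  induction B using Finset.induction_on with
  | empty => simp
  | @insert x B hx ih =>
    intro hB h
    have hBE : B ⊆ M.E := fun y hy => hB (Finset.mem_insert_of_mem hy)
    have hxE : x ∈ M.E := hB (Finset.mem_insert_self x B)
    have hAB : M.rk (A ∪ B) = M.rk A := ih hBE fun y hy => h y (Finset.mem_insert_of_mem hy)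
    have hxA : M.rk (insert x A) = M.rk A := h x (Finset.mem_insert_self x B)
    have hU : (A ∪ B) ∪ (insert x A) = A ∪ insert x B := by
      ext y; simp [Finset.mem_union, Finset.mem_insert]; tauto
    have hABE : A ∪ B ⊆ M.E := Finset.union_subset hA hBE
    have hIE : insert x A ⊆ M.E := Finset.insert_subset hxE hA
    have hsub := M.rk_submod (A ∪ B) (insert x A) hABE hIE
    rw [hU] at hsub
    have hAin : A ⊆ (A ∪ B) ∩ (insert x A) := by
      intro y hy; simp [Finset.mem_inter, Finset.mem_union, Finset.mem_insert]; tauto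
    have h1 : M.rk A ≤ M.rk ((A ∪ B) ∩ (insert x A)) :=
      M.rk_mono _ _ hAin (Finset.inter_subset_left.trans hABE)
    have h2 : M.rk (A ∪ B) ≤ M.rk (A ∪ insert x B) :=
      M.rk_mono _ _ (by intro y hy; simp_all [Finset.mem_union, Finset.mem_insert])
        (Finset.union_subset hA hB)
    linarith

/-- For an `(n,k,d,r,δ)_i`-matroid with `r ≥ 1`, `δ ≥ 2`, we have `d ≥ δ`. -/
theorem stmt1 {α : Type} [DecidableEq α] (M : RankMatroid α) (r δ : ℤ)
    (hr : 1 ≤ r) (hδ : 2 ≤ δ) (hM : M.NonDegenerate)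
    (B : Finset α) (hBE : B ⊆ M.E) (hBind : M.rk B = (B.card : ℤ))
    (hBk : (B.card : ℤ) = M.rk M.E)
    (hrep : ∀ x ∈ B, ∃ R : Finset α, M.IsRepairSet r δ x R) :
    δ ≤ (M.dist M.E : ℤ) := by
  by_contra hcon
  push_neg at hcon
  -- the defining set of `dist E` is nonempty
  set S : Set ℕ := {m : ℕ | ∃ Y : Finset α, Y ⊆ M.E ∧ Y.card = m ∧ M.rk (M.E \ Y) < M.rk M.E}
    with hSdef
  have hS : S.Nonempty := by
    by_contra h
    rw [Set.not_nonempty_iff_eq_empty] at h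
    have : M.dist M.E = 0 := by
      rw [RankMatroid.dist, ← hSdef, h, Nat.sInf_empty]
    have := hM.2
    omega
  have hmem : M.dist M.E ∈ S := Nat.sInf_mem hS
  obtain ⟨Y, hYE, hYcard, hYrk⟩ := hmem
  -- every element of B is in the closure of E \ Y
  have hkey : ∀ x ∈ B, M.rk (insert x (M.E \ Y)) = M.rk (M.E \ Y) := by
    intro x hxB
    obtain ⟨R, hRE, hxR, _, hRd⟩ := hrep x hxB
    -- rk (R \ Y) = rk R
    have hRY : M.rk (R \ Y) = M.rk R := by
      by_contra hne
      have hlt : M.rk (R \ (R ∩ Y)) < M.rk R := by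
        have : R \ (R ∩ Y) = R \ Y := by
          ext y; simp [Finset.mem_sdiff, Finset.mem_inter]
        rw [this]
        exact lt_of_le_of_ne (M.rk_mono _ _ Finset.sdiff_subset hRE) hne
      have hdle : M.dist R ≤ (R ∩ Y).card :=
        Nat.sInf_le ⟨R ∩ Y, Finset.inter_subset_left, rfl, hlt⟩
      have hcY : (R ∩ Y).card ≤ Y.card := Finset.card_le_card Finset.inter_subset_right
      have : ((M.dist R : ℤ)) ≤ (M.dist M.E : ℤ) := by
        rw [← hYcard]; exact_mod_cast hdle.trans hcY
      linarith
    -- submodularity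
    have hsub := M.rk_submod (M.E \ Y) R (Finset.sdiff_subset) hRE
    have hint : (M.E \ Y) ∩ R = R \ Y := by
      ext y; simp only [Finset.mem_inter, Finset.mem_sdiff]
      constructor
      · tauto
      · rintro ⟨h1, h2⟩; exact ⟨⟨hRE h1, h2⟩, h1⟩
    rw [hint, hRY] at hsub
    have h1 : M.rk (insert x (M.E \ Y)) ≤ M.rk ((M.E \ Y) ∪ R) := by
      refine M.rk_mono _ _ ?_ (Finset.union_subset Finset.sdiff_subset hRE)
      intro y hy
      rcases Finset.mem_insert.mp hy with h | h
      · exact Finset.mem_union_right _ (h ▸ hxR)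
      · exact Finset.mem_union_left _ h
    have h2 : M.rk (M.E \ Y) ≤ M.rk (insert x (M.E \ Y)) :=
      M.rk_mono _ _ (Finset.subset_insert _ _)
        (Finset.insert_subset (hBE hxB) Finset.sdiff_subset)
    linarith
  have hfin := rk_union_eq_of_inserts M (M.E \ Y) Finset.sdiff_subset B hBE hkey
  have hge : M.rk B ≤ M.rk ((M.E \ Y) ∪ B) :=
    M.rk_mono _ _ Finset.subset_union_right (Finset.union_subset Finset.sdiff_subset hBE)
  rw [hfin, hBind, hBk] at hge
  linarith
end

section
/- Let M = (ρ, E) be a matroid and let Z(M) be its collection of cyclic flats. Then for all X, Y ∈ Z(M): (a) cl(X ∪ Y) ∈ Z(M) and cl(X ∪ Y) is the least cyclic flat (under inclusion) containing both X and Y; (b) cyc(X ∩ Y) ∈ Z(M) and cyc(X ∩ Y) is the greatest cyclic flat (under inclusion) contained in both X and Y. In particular, (Z(M), ⊆) is a lattice with join X ∨ Y = cl(X ∪ Y) and meet X ∧ Y = cyc(X ∩ Y). -/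
namespace RankMatroid

variable {α : Type} [DecidableEq α]

variable (M : RankMatroid α)

lemma mem_cl {A : Finset α} {y : α} :
    y ∈ M.cl A ↔ y ∈ M.E ∧ M.rk (insert y A) = M.rk A := by
  simp [cl]

lemma cl_subset_E (A : Finset α) : M.cl A ⊆ M.E := Finset.filter_subset _ _

lemma rk_insert_le_s3 {A : Finset α} {x : α} (hA : A ⊆ M.E) (hx : x ∈ M.E) :
    M.rk (insert x A) ≤ M.rk A + 1 := by
  by_cases h : x ∈ A
  · simp [Finset.insert_eq_self.2 h]
  have hxE : ({x} : Finset α) ⊆ M.E := by simpa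
  have hsub := M.rk_submod A {x} hA hxE
  have h1 : M.rk {x} ≤ 1 := by simpa using M.rk_le_card {x} hxE
  have h0 : 0 ≤ M.rk (A ∩ {x}) :=
    M.rk_nonneg _ (le_trans Finset.inter_subset_left hA)
  have he : A ∪ {x} = insert x A := by
    rw [Finset.union_comm, ← Finset.insert_eq]
  rw [he] at hsub
  linarith

lemma rk_erase_ge {A : Finset α} {x : α} (hA : A ⊆ M.E) (hx : x ∈ A) :
    M.rk A ≤ M.rk (A.erase x) + 1 := by
  have := M.rk_insert_le_s3 (A := A.erase x) (x := x)
    (le_trans (Finset.erase_subset _ _) hA) (hA hx)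
  rwa [Finset.insert_erase hx] at this

lemma rk_union_card {A : Finset α} (hA : A ⊆ M.E) :
    ∀ T : Finset α, T ⊆ M.E → M.rk (A ∪ T) ≤ M.rk A + T.card := by
  intro T
  induction T using Finset.induction with
  | empty => intro _; simp
  | @insert y T hy ih =>
    intro hT
    have hT' : T ⊆ M.E := fun a ha => hT (Finset.mem_insert_of_mem ha)
    have hyE : y ∈ M.E := hT (Finset.mem_insert_self _ _)
    have h1 : A ∪ insert y T = insert y (A ∪ T) := by
      ext a; simp only [Finset.mem_union, Finset.mem_insert]; tauto
    have h2 := M.rk_insert_le_s3 (A := A ∪ T) (Finset.union_subset hA hT') hyE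
    have h3 := ih hT'
    rw [h1, Finset.card_insert_of_notMem hy]
    push_cast
    linarith

lemma subset_cl {A : Finset α} (hA : A ⊆ M.E) : A ⊆ M.cl A := by
  intro x hx
  rw [mem_cl]
  exact ⟨hA hx, by rw [Finset.insert_eq_self.2 hx]⟩

lemma rk_union_subset_cl {A : Finset α} (hA : A ⊆ M.E) :
    ∀ S : Finset α, S ⊆ M.cl A → M.rk (A ∪ S) = M.rk A := by
  intro S
  induction S using Finset.induction with
  | empty => intro _; simp
  | @insert y S hy ih =>
    intro hS
    have hS' : S ⊆ M.cl A := fun a ha => hS (Finset.mem_insert_of_mem ha)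
    have hyc : y ∈ M.cl A := hS (Finset.mem_insert_self _ _)
    rw [mem_cl] at hyc
    have hAS : A ∪ S ⊆ M.E :=
      Finset.union_subset hA (le_trans hS' (M.cl_subset_E A))
    have hU : A ∪ insert y S = insert y (A ∪ S) := by ext a; simp only [Finset.mem_union, Finset.mem_insert]; tauto
    have hiy : insert y A ⊆ M.E := Finset.insert_subset hyc.1 hA
    have hsub := M.rk_submod (A ∪ S) (insert y A) hAS hiy
    have h1 : (A ∪ S) ∪ insert y A = insert y (A ∪ S) := by ext a; simp only [Finset.mem_union, Finset.mem_insert]; tauto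
    have h2 : A ⊆ (A ∪ S) ∩ insert y A := by
      intro a ha; simp [ha]
    have h3 : M.rk A ≤ M.rk ((A ∪ S) ∩ insert y A) :=
      M.rk_mono _ _ h2 (le_trans Finset.inter_subset_left hAS)
    have h4 : M.rk (A ∪ S) ≤ M.rk (insert y (A ∪ S)) :=
      M.rk_mono _ _ (Finset.subset_insert _ _) (Finset.insert_subset hyc.1 hAS)
    rw [h1] at hsub
    rw [hU, ih hS', hyc.2] at *
    linarith

lemma rk_cl {A : Finset α} (hA : A ⊆ M.E) : M.rk (M.cl A) = M.rk A := by
  have := M.rk_union_subset_cl hA (M.cl A) (le_refl _)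
  rwa [Finset.union_eq_right.2 (M.subset_cl hA)] at this

lemma cl_mono {A B : Finset α} (hAB : A ⊆ B) (hB : B ⊆ M.E) : M.cl A ⊆ M.cl B := by
  intro y hy
  rw [mem_cl] at hy ⊢
  have hA : A ⊆ M.E := le_trans hAB hB
  refine ⟨hy.1, le_antisymm ?_ (M.rk_mono _ _ (Finset.subset_insert _ _)
    (Finset.insert_subset hy.1 hB))⟩
  have hsub := M.rk_submod B (insert y A) hB (Finset.insert_subset hy.1 hA)
  have h1 : B ∪ insert y A = insert y B := by
    ext a
    simp only [Finset.mem_union, Finset.mem_insert]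
    constructor
    · rintro (h | h | h) <;> [exact Or.inr h; exact Or.inl h; exact Or.inr (hAB h)]
    · rintro (h | h) <;> [exact Or.inr (Or.inl h); exact Or.inl h]
  have h2 : A ⊆ B ∩ insert y A := fun a ha => by simp [hAB ha, ha]
  have h3 : M.rk A ≤ M.rk (B ∩ insert y A) :=
    M.rk_mono _ _ h2 (le_trans Finset.inter_subset_left hB)
  rw [h1, hy.2] at hsub
  linarith

lemma cl_cl {A : Finset α} (hA : A ⊆ M.E) : M.cl (M.cl A) = M.cl A := by
  apply le_antisymm _ (M.subset_cl (M.cl_subset_E A))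
  intro y hy
  rw [mem_cl] at hy ⊢
  refine ⟨hy.1, le_antisymm ?_ (M.rk_mono _ _ (Finset.subset_insert _ _)
    (Finset.insert_subset hy.1 hA))⟩
  have h1 : M.rk (insert y A) ≤ M.rk (insert y (M.cl A)) :=
    M.rk_mono _ _ (Finset.insert_subset_insert _ (M.subset_cl hA))
      (Finset.insert_subset hy.1 (M.cl_subset_E A))
  rw [hy.2, M.rk_cl hA] at h1
  exact h1

lemma rk_erase_of_not_cyc {A : Finset α} {x : α} (hA : A ⊆ M.E) (hx : x ∈ A)
    (hne : M.rk (A.erase x) ≠ M.rk A) : M.rk (A.erase x) = M.rk A - 1 := by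
  have h1 := M.rk_erase_ge hA hx
  have h2 := M.rk_mono (A.erase x) A (Finset.erase_subset _ _) hA
  omega

lemma rk_sdiff {A : Finset α} (hA : A ⊆ M.E) :
    ∀ T : Finset α, T ⊆ A → (∀ x ∈ T, M.rk (A.erase x) ≠ M.rk A) →
      M.rk (A \ T) = M.rk A - T.card := by
  intro T
  induction T using Finset.induction with
  | empty => intro _ _; simp
  | @insert x T hx ih =>
    intro hT hbad
    have hT' : T ⊆ A := fun a ha => hT (Finset.mem_insert_of_mem ha)
    have hxA : x ∈ A := hT (Finset.mem_insert_self _ _)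
    have hxbad := hbad x (Finset.mem_insert_self _ _)
    have hxr : M.rk (A.erase x) = M.rk A - 1 := M.rk_erase_of_not_cyc hA hxA hxbad
    have hIH : M.rk (A \ T) = M.rk A - T.card :=
      ih hT' (fun a ha => hbad a (Finset.mem_insert_of_mem ha))
    have hsub := M.rk_submod (A.erase x) (A \ T)
      (le_trans (Finset.erase_subset _ _) hA) (le_trans (Finset.sdiff_subset) hA)
    have hU : A.erase x ∪ (A \ T) = A := by
      ext a
      simp only [Finset.mem_union, Finset.mem_erase, Finset.mem_sdiff]
      constructor
      · tauto
      · intro ha; by_cases h : a = x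
        · subst h; exact Or.inr ⟨ha, hx⟩
        · exact Or.inl ⟨h, ha⟩
    have hI : A.erase x ∩ (A \ T) = A \ insert x T := by
      ext a
      simp only [Finset.mem_inter, Finset.mem_erase, Finset.mem_sdiff, Finset.mem_insert]
      tauto
    rw [hU, hI] at hsub
    -- lower bound
    have hxAT : x ∈ A \ T := Finset.mem_sdiff.2 ⟨hxA, hx⟩
    have hlow := M.rk_erase_ge (A := A \ T) (le_trans Finset.sdiff_subset hA) hxAT
    have hE : (A \ T).erase x = A \ insert x T := by
      ext a
      simp only [Finset.mem_erase, Finset.mem_sdiff, Finset.mem_insert]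
      tauto
    rw [hE] at hlow
    rw [Finset.card_insert_of_notMem hx]
    push_cast
    omega

lemma cyc_subset (A : Finset α) : M.cyc A ⊆ A := Finset.filter_subset _ _

lemma sdiff_cyc_bad {A : Finset α} {x : α} (hx : x ∈ A \ M.cyc A) :
    M.rk (A.erase x) ≠ M.rk A := by
  rcases Finset.mem_sdiff.1 hx with ⟨h1, h2⟩
  intro h
  exact h2 (Finset.mem_filter.2 ⟨h1, h⟩)

lemma rk_cyc {A : Finset α} (hA : A ⊆ M.E) :
    M.rk (M.cyc A) = M.rk A - (A \ M.cyc A).card := by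
  have h := M.rk_sdiff hA (A \ M.cyc A) Finset.sdiff_subset
    (fun x hx => M.sdiff_cyc_bad hx)
  have he : A \ (A \ M.cyc A) = M.cyc A := by
    ext a
    simp only [Finset.mem_sdiff]
    constructor
    · rintro ⟨h1, h2⟩; by_contra hc; exact h2 ⟨h1, hc⟩
    · intro h; exact ⟨M.cyc_subset A h, fun h' => h'.2 h⟩
  rwa [he] at h

lemma cyclic_cyc {A : Finset α} (hA : A ⊆ M.E) : M.Cyclic (M.cyc A) := by
  intro x hx
  have hxr : M.rk (A.erase x) = M.rk A := (Finset.mem_filter.1 hx).2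
  have hxA : x ∈ A := M.cyc_subset A hx
  have hU : A.erase x = (M.cyc A).erase x ∪ (A \ M.cyc A) := by
    ext a
    simp only [Finset.mem_erase, Finset.mem_union, Finset.mem_sdiff]
    constructor
    · intro ⟨h1, h2⟩
      by_cases h : a ∈ M.cyc A
      · exact Or.inl ⟨h1, h⟩
      · exact Or.inr ⟨h2, h⟩
    · rintro (⟨h1, h2⟩ | ⟨h1, h2⟩)
      · exact ⟨h1, M.cyc_subset A h2⟩
      · exact ⟨fun he => h2 (he ▸ hx), h1⟩
  have hub := M.rk_union_card (A := (M.cyc A).erase x)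
    (le_trans (Finset.erase_subset _ _) (le_trans (M.cyc_subset A) hA))
    (A \ M.cyc A) (le_trans Finset.sdiff_subset hA)
  rw [← hU, hxr] at hub
  have hc := M.rk_cyc hA
  have hmono := M.rk_mono ((M.cyc A).erase x) (M.cyc A) (Finset.erase_subset _ _)
    (le_trans (M.cyc_subset A) hA)
  omega

lemma cyc_flat {A : Finset α} (hA : A ⊆ M.E) (hflat : M.cl A = A) :
    M.cl (M.cyc A) = M.cyc A := by
  have hcA : M.cyc A ⊆ M.E := le_trans (M.cyc_subset A) hA
  apply le_antisymm _ (M.subset_cl hcA)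
  intro y hy
  have hyA : y ∈ A := hflat ▸ M.cl_mono (M.cyc_subset A) hA hy
  by_contra hyc
  have hyD : y ∈ A \ M.cyc A := Finset.mem_sdiff.2 ⟨hyA, hyc⟩
  rw [mem_cl] at hy
  have hins : insert y (M.cyc A) = A \ ((A \ M.cyc A).erase y) := by
    ext a
    simp only [Finset.mem_insert, Finset.mem_sdiff, Finset.mem_erase]
    constructor
    · rintro (rfl | h)
      · exact ⟨hyA, fun h' => (h'.1 rfl).elim⟩
      · exact ⟨M.cyc_subset A h, fun h' => h'.2.2 h⟩
    · rintro ⟨h1, h2⟩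
      by_cases h : a = y
      · exact Or.inl h
      · exact Or.inr (by_contra fun hc => h2 ⟨h, h1, hc⟩)
  have hrk := M.rk_sdiff hA ((A \ M.cyc A).erase y)
    (le_trans (Finset.erase_subset _ _) Finset.sdiff_subset)
    (fun x hx => M.sdiff_cyc_bad (Finset.erase_subset _ _ hx))
  rw [← hins] at hrk
  rw [Finset.card_erase_of_mem hyD] at hrk
  have hc := M.rk_cyc hA
  have hDpos : 1 ≤ (A \ M.cyc A).card := Finset.card_pos.2 ⟨y, hyD⟩
  rw [hy.2, hc] at hrk
  omega

lemma cyclic_subset_cyc {W A : Finset α} (hW : M.Cyclic W) (hWA : W ⊆ A)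
    (hA : A ⊆ M.E) : W ⊆ M.cyc A := by
  intro x hx
  have hxA : x ∈ A := hWA hx
  have h1 : x ∈ M.cl (W.erase x) := by
    rw [mem_cl]
    exact ⟨hA hxA, by rw [Finset.insert_erase hx, hW x hx]⟩
  have h2 : x ∈ M.cl (A.erase x) :=
    M.cl_mono (Finset.erase_subset_erase _ hWA)
      (le_trans (Finset.erase_subset _ _) hA) h1
  rw [mem_cl, Finset.insert_erase hxA] at h2
  exact Finset.mem_filter.2 ⟨hxA, h2.2.symm⟩

lemma cyclic_cl_union {X Y : Finset α} (hXE : X ⊆ M.E) (hYE : Y ⊆ M.E)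
    (hXc : M.Cyclic X) (hYc : M.Cyclic Y) : M.Cyclic (M.cl (X ∪ Y)) := by
  intro z hz
  set F := M.cl (X ∪ Y) with hF
  have hUE : X ∪ Y ⊆ M.E := Finset.union_subset hXE hYE
  have hFE : F ⊆ M.E := M.cl_subset_E _
  have hrkF : M.rk F = M.rk (X ∪ Y) := M.rk_cl hUE
  have hsubF : X ∪ Y ⊆ F := M.subset_cl hUE
  have hFzE : F.erase z ⊆ M.E := le_trans (Finset.erase_subset _ _) hFE
  have hmono : M.rk (F.erase z) ≤ M.rk F :=
    M.rk_mono _ _ (Finset.erase_subset _ _) hFE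
  have key : ∀ W : Finset α, M.Cyclic W → z ∈ W → W ⊆ F →
      M.rk (F.erase z) = M.rk F := by
    intro W hWc hzW hWF
    have h1 : z ∈ M.cl (W.erase z) := by
      rw [mem_cl]
      exact ⟨hFE hz, by rw [Finset.insert_erase hzW, hWc z hzW]⟩
    have h2 : z ∈ M.cl (F.erase z) :=
      M.cl_mono (Finset.erase_subset_erase _ hWF) hFzE h1
    rw [mem_cl, Finset.insert_erase hz] at h2
    exact h2.2.symm
  by_cases hzU : z ∈ X ∪ Y
  · rcases Finset.mem_union.1 hzU with h | h
    · exact key X hXc h (le_trans Finset.subset_union_left hsubF)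
    · exact key Y hYc h (le_trans Finset.subset_union_right hsubF)
  · have hsub' : X ∪ Y ⊆ F.erase z := fun a ha =>
      Finset.mem_erase.2 ⟨fun h => hzU (h ▸ ha), hsubF ha⟩
    have h := M.rk_mono (X ∪ Y) (F.erase z) hsub' hFzE
    omega

end RankMatroid

/-- The cyclic flats form a lattice under inclusion, with join `cl(X ∪ Y)` and
meet `cyc(X ∩ Y)`. -/
theorem stmt3 {α : Type} [DecidableEq α] (M : RankMatroid α)
    (X Y : Finset α) (hX : X ∈ M.Z) (hY : Y ∈ M.Z) :
    (M.cl (X ∪ Y) ∈ M.Z ∧ X ⊆ M.cl (X ∪ Y) ∧ Y ⊆ M.cl (X ∪ Y) ∧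
      ∀ W ∈ M.Z, X ⊆ W → Y ⊆ W → M.cl (X ∪ Y) ⊆ W) ∧
    (M.cyc (X ∩ Y) ∈ M.Z ∧ M.cyc (X ∩ Y) ⊆ X ∧ M.cyc (X ∩ Y) ⊆ Y ∧
      ∀ W ∈ M.Z, W ⊆ X → W ⊆ Y → W ⊆ M.cyc (X ∩ Y)) := by
  obtain ⟨hXE, hXc, hXf⟩ := hX
  obtain ⟨hYE, hYc, hYf⟩ := hY
  have hUE : X ∪ Y ⊆ M.E := Finset.union_subset hXE hYE
  have hIE : X ∩ Y ⊆ M.E := le_trans Finset.inter_subset_left hXE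
  have hIflat : M.cl (X ∩ Y) = X ∩ Y := by
    apply le_antisymm _ (M.subset_cl hIE)
    intro a ha
    have h1 : a ∈ X := hXf ▸ M.cl_mono Finset.inter_subset_left hXE ha
    have h2 : a ∈ Y := hYf ▸ M.cl_mono Finset.inter_subset_right hYE ha
    exact Finset.mem_inter.2 ⟨h1, h2⟩
  refine ⟨⟨⟨M.cl_subset_E _, M.cyclic_cl_union hXE hYE hXc hYc, M.cl_cl hUE⟩, ?_, ?_, ?_⟩,
    ⟨⟨le_trans (M.cyc_subset _) hIE, M.cyclic_cyc hIE, M.cyc_flat hIE hIflat⟩, ?_, ?_, ?_⟩⟩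
  · exact le_trans Finset.subset_union_left (M.subset_cl hUE)
  · exact le_trans Finset.subset_union_right (M.subset_cl hUE)
  · intro W hW hXW hYW
    obtain ⟨hWE, hWc, hWf⟩ := hW
    calc M.cl (X ∪ Y) ⊆ M.cl W := M.cl_mono (Finset.union_subset hXW hYW) hWE
    _ = W := hWf
  · exact le_trans (M.cyc_subset _) Finset.inter_subset_left
  · exact le_trans (M.cyc_subset _) Finset.inter_subset_right
  · intro W hW hWX hWY
    exact M.cyclic_subset_cyc hW.2.1 (Finset.subset_inter hWX hWY) hIE
end

section
/- Let M = (ρ, E) be a non-degenerate matroid with n = |E| and k = ρ(E). The following are equivalent: (i) d = n − k + 1; (ii) M is the uniform matroid of rank k on E, i.e., ρ(X) = min{|X|, k} for all X ⊆ E; (iii) Z(M) = {∅, E}, i.e., the only cyclic flats of M are ∅ and E. -/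
namespace RankMatroid

variable {α : Type} [DecidableEq α]

lemma rk_empty_s11 (M : RankMatroid α) : M.rk ∅ = 0 :=
  le_antisymm (by simpa using M.rk_le_card ∅ (Finset.empty_subset _))
    (M.rk_nonneg ∅ (Finset.empty_subset _))

lemma rk_union_le_add_card (M : RankMatroid α) {A B : Finset α}
    (hA : A ⊆ M.E) (hB : B ⊆ M.E) :
    M.rk (A ∪ B) ≤ M.rk A + B.card := by
  have h := M.rk_submod A B hA hB
  have h2 := M.rk_nonneg (A ∩ B) ((Finset.inter_subset_left).trans hA)
  have h3 := M.rk_le_card B hB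
  linarith

lemma rk_union_eq_of_forall (M : RankMatroid α) {C : Finset α} (S : Finset α)
    (hC : C ⊆ M.E) (hS : S ⊆ M.E)
    (h : ∀ y ∈ S, M.rk (insert y C) = M.rk C) : M.rk (C ∪ S) = M.rk C := by
  induction S using Finset.induction with
  | empty => simp
  | @insert a S haS ih =>
    have hSE : S ⊆ M.E := (Finset.subset_insert a S).trans hS
    have haE : a ∈ M.E := hS (Finset.mem_insert_self a S)
    have hIH : M.rk (C ∪ S) = M.rk C :=
      ih hSE (fun y hy => h y (Finset.mem_insert_of_mem hy))
    have hrw : C ∪ insert a S = insert a (C ∪ S) := Finset.union_insert a C S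
    by_cases hac : a ∈ C ∪ S
    · rw [hrw, Finset.insert_eq_self.mpr hac, hIH]
    · have haC : a ∉ C := fun h => hac (Finset.mem_union.mpr (Or.inl h))
      have haS' : a ∉ S := fun h => hac (Finset.mem_union.mpr (Or.inr h))
      have hinter : (insert a C) ∩ (C ∪ S) = C := by
        ext x
        simp only [Finset.mem_inter, Finset.mem_insert, Finset.mem_union]
        constructor
        · rintro ⟨(rfl | hxC), (hxC' | hxS)⟩ <;>
            first
              | assumption
              | exact absurd hxC' haC
              | exact absurd hxS haS'
        · intro hx; exact ⟨Or.inr hx, Or.inl hx⟩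
      have hsub := M.rk_submod (insert a C) (C ∪ S)
        (Finset.insert_subset haE hC) (Finset.union_subset hC hSE)
      have hcc : C ∪ (C ∪ S) = C ∪ S := by rw [← Finset.union_assoc, Finset.union_self]
      rw [Finset.insert_union, hcc, ← hrw] at hsub
      rw [hinter, h a (Finset.mem_insert_self a S), hIH] at hsub
      have hge : M.rk C ≤ M.rk (C ∪ insert a S) :=
        M.rk_mono _ _ (Finset.subset_union_left)
          (Finset.union_subset hC hS)
      linarith

lemma mem_cl_iff (M : RankMatroid α) {X : Finset α} {y : α} :
    y ∈ M.cl X ↔ y ∈ M.E ∧ M.rk (insert y X) = M.rk X := Finset.mem_filter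

end RankMatroid

/-- MDS characterisation: `d = n − k + 1` iff `M` is uniform of rank `k`, iff the
only cyclic flats are `∅` and `E`. -/
theorem stmt11 {α : Type} [DecidableEq α] (M : RankMatroid α)
    (hM : M.NonDegenerate) :
    (((M.dist M.E : ℤ) = (M.E.card : ℤ) - M.rk M.E + 1) ↔
      (∀ X ⊆ M.E, M.rk X = min (X.card : ℤ) (M.rk M.E))) ∧
    ((∀ X ⊆ M.E, M.rk X = min (X.card : ℤ) (M.rk M.E)) ↔
      (M.Z = {∅, M.E})) := by
  classical
  obtain ⟨hsing, hd2⟩ := hM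
  have hEE : M.E ⊆ M.E := Finset.Subset.refl _
  set S : Set ℕ := {m : ℕ | ∃ Y : Finset α, Y ⊆ M.E ∧ Y.card = m ∧ M.rk (M.E \ Y) < M.rk M.E}
    with hS0
  have hdist : M.dist M.E = sInf S := rfl
  have hSne : S.Nonempty := by
    by_contra h
    rw [Set.not_nonempty_iff_eq_empty] at h
    rw [hdist, h, Nat.sInf_empty] at hd2
    omega
  have hk0 : 0 ≤ M.rk M.E := M.rk_nonneg _ hEE
  have hk1 : 1 ≤ M.rk M.E := by
    obtain ⟨m, Y, hY, hYc, hYr⟩ := hSne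
    have := M.rk_nonneg (M.E \ Y) (Finset.sdiff_subset)
    omega
  have hkn : M.rk M.E ≤ (M.E.card : ℤ) := M.rk_le_card _ hEE
  set kn : ℕ := (M.rk M.E).toNat with hknd
  have hknk : (kn : ℤ) = M.rk M.E := Int.toNat_of_nonneg hk0
  have hkn1 : 1 ≤ kn := by omega
  have hknle : kn ≤ M.E.card := by omega
  have herase : ∀ x ∈ M.E, M.rk (M.E.erase x) = M.rk M.E := by
    intro x hx
    refine le_antisymm (M.rk_mono _ _ (Finset.erase_subset x M.E) hEE) ?_
    by_contra h
    push_neg at h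
    have hmem : 1 ∈ S := ⟨{x}, Finset.singleton_subset_iff.mpr hx, Finset.card_singleton x,
      by rwa [← Finset.erase_eq]⟩
    have hle := Nat.sInf_le hmem
    rw [← hdist] at hle
    omega
  have hclE : M.cl M.E = M.E := by
    simp only [RankMatroid.cl]
    rw [Finset.filter_eq_self]
    intro y hy
    rw [Finset.insert_eq_self.mpr hy]
  -- (i) → (ii)
  have h12 : (M.dist M.E : ℤ) = (M.E.card : ℤ) - M.rk M.E + 1 →
      ∀ X ⊆ M.E, M.rk X = min (X.card : ℤ) (M.rk M.E) := by
    intro hd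
    have hbig : ∀ X ⊆ M.E, kn ≤ X.card → M.rk X = M.rk M.E := by
      intro X hX hXc
      refine le_antisymm (M.rk_mono _ _ hX hEE) ?_
      by_contra h
      push_neg at h
      have hEX : M.E \ (M.E \ X) = X := by
        rw [Finset.sdiff_sdiff_self_left]
        exact Finset.inter_eq_right.mpr hX
      have hmem : (M.E \ X).card ∈ S := ⟨M.E \ X, Finset.sdiff_subset, rfl, by rwa [hEX]⟩
      have hle := Nat.sInf_le hmem
      rw [← hdist] at hle
      have hcard : (M.E \ X).card = M.E.card - X.card := Finset.card_sdiff_of_subset hX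
      have hXn : X.card ≤ M.E.card := Finset.card_le_card hX
      omega
    intro X hX
    refine le_antisymm (le_min (M.rk_le_card X hX) (M.rk_mono X M.E hX hEE)) ?_
    by_cases hc : kn ≤ X.card
    · rw [hbig X hX hc]
      exact min_le_right _ _
    · push_neg at hc
      obtain ⟨X', hXX', hX'E, hX'c⟩ := Finset.exists_subsuperset_card_eq hX (le_of_lt hc) hknle
      have hrkX' : M.rk X' = M.rk M.E := hbig X' hX'E (by omega)
      have hun : X ∪ (X' \ X) = X' := Finset.union_sdiff_of_subset hXX'
      have hle := M.rk_union_le_add_card (B := X' \ X) hX ((Finset.sdiff_subset).trans hX'E)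
      rw [hun, hrkX'] at hle
      have hcard : (X' \ X).card = kn - X.card := by rw [Finset.card_sdiff_of_subset hXX', hX'c]
      rw [hcard] at hle
      have hmin : min ((X.card : ℕ) : ℤ) (M.rk M.E) = ((X.card : ℕ) : ℤ) :=
        min_eq_left (by omega)
      rw [hmin]
      omega
  -- (ii) → (i)
  have h21 : (∀ X ⊆ M.E, M.rk X = min (X.card : ℤ) (M.rk M.E)) →
      (M.dist M.E : ℤ) = (M.E.card : ℤ) - M.rk M.E + 1 := by
    intro hu
    have hmemv : M.E.card - kn + 1 ∈ S := by
      obtain ⟨Y, hY, hYc⟩ := Finset.exists_subset_card_eq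
        (s := M.E) (n := M.E.card - kn + 1) (by omega)
      refine ⟨Y, hY, hYc, ?_⟩
      have hcd : (M.E \ Y).card = kn - 1 := by rw [Finset.card_sdiff_of_subset hY, hYc]; omega
      calc M.rk (M.E \ Y) = min (((kn - 1 : ℕ)) : ℤ) (M.rk M.E) := by
              rw [← hcd]; exact hu _ Finset.sdiff_subset
        _ ≤ ((kn - 1 : ℕ) : ℤ) := min_le_left _ _
        _ < M.rk M.E := by omega
    have hlow : ∀ m ∈ S, M.E.card - kn + 1 ≤ m := by
      rintro m ⟨Y, hY, hYc, hYr⟩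
      have hYn : Y.card ≤ M.E.card := Finset.card_le_card hY
      have hcd : (M.E \ Y).card = M.E.card - m := by rw [Finset.card_sdiff_of_subset hY, hYc]
      rw [hu (M.E \ Y) Finset.sdiff_subset, hcd] at hYr
      have hlt : ((M.E.card - m : ℕ) : ℤ) < M.rk M.E := by
        rcases min_lt_iff.mp hYr with h | h
        · exact h
        · exact absurd h (lt_irrefl _)
      omega
    have hdv : M.dist M.E = M.E.card - kn + 1 := by
      rw [hdist]
      exact le_antisymm (Nat.sInf_le hmemv) (le_csInf hSne hlow)
    rw [hdv]
    omega
  -- (ii) → (iii)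
  have h23 : (∀ X ⊆ M.E, M.rk X = min (X.card : ℤ) (M.rk M.E)) → M.Z = {∅, M.E} := by
    intro hu
    ext F
    simp only [RankMatroid.Z, RankMatroid.IsCyclicFlat, Set.mem_setOf_eq, Set.mem_insert_iff, Set.mem_singleton_iff]
    constructor
    · rintro ⟨hFE, hcyc, hflat⟩
      by_cases hF : F = ∅
      · exact Or.inl hF
      right
      obtain ⟨x, hx⟩ := Finset.nonempty_iff_ne_empty.mpr hF
      have h1 := hcyc x hx
      have hFc1 : 1 ≤ F.card := Finset.card_pos.mpr ⟨x, hx⟩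
      have he : (F.erase x).card = F.card - 1 := Finset.card_erase_of_mem hx
      rw [hu F hFE, hu (F.erase x) ((Finset.erase_subset x F).trans hFE), he] at h1
      have hkF : M.rk M.E < (F.card : ℤ) := by
        by_contra hkk
        push_neg at hkk
        rw [min_eq_left (by omega), min_eq_left hkk] at h1
        omega
      apply Finset.Subset.antisymm hFE
      intro y hy
      have hmem : y ∈ M.cl F := by
        rw [M.mem_cl_iff]
        refine ⟨hy, ?_⟩
        rw [hu (insert y F) (Finset.insert_subset hy hFE), hu F hFE]
        have hcard : (F.card : ℤ) ≤ ((insert y F).card : ℤ) := by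
          exact_mod_cast Finset.card_le_card (Finset.subset_insert y F)
        rw [min_eq_right (by omega), min_eq_right (by omega)]
      rwa [hflat] at hmem
    · rintro (rfl | rfl)
      · refine ⟨Finset.empty_subset _, fun x hx => absurd hx (Finset.notMem_empty x), ?_⟩
        simp only [RankMatroid.cl]
        rw [Finset.filter_eq_empty_iff]
        intro y hy
        have h1 : insert y (∅ : Finset α) = {y} := rfl
        rw [h1, M.rk_empty_s11]
        have := hsing y hy
        omega
      · exact ⟨hEE, herase, hclE⟩
  -- (iii) → (ii)
  have h32 : M.Z = {∅, M.E} → ∀ X ⊆ M.E, M.rk X = min (X.card : ℤ) (M.rk M.E) := by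
    intro hZ X hX
    refine le_antisymm (le_min (M.rk_le_card X hX) (M.rk_mono X M.E hX hEE)) ?_
    by_contra h
    push_neg at h
    rw [lt_min_iff] at h
    obtain ⟨hdep, hlt⟩ := h
    set T := X.powerset.filter (fun C => M.rk C < C.card) with hT
    have hXT : X ∈ T := Finset.mem_filter.mpr ⟨Finset.mem_powerset.mpr (Finset.Subset.refl X), hdep⟩
    obtain ⟨C, hCT, hmin⟩ := Finset.exists_min_image T Finset.card ⟨X, hXT⟩
    have hCX : C ⊆ X := Finset.mem_powerset.mp (Finset.mem_filter.mp hCT).1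
    have hCdep : M.rk C < (C.card : ℤ) := (Finset.mem_filter.mp hCT).2
    have hCE : C ⊆ M.E := hCX.trans hX
    have hC0 : 0 ≤ M.rk C := M.rk_nonneg C hCE
    have hC1 : 1 ≤ C.card := by omega
    have hind : ∀ x ∈ C, M.rk (C.erase x) = (C.card : ℤ) - 1 := by
      intro x hxC
      have hce : (C.erase x).card = C.card - 1 := Finset.card_erase_of_mem hxC
      have hnd : ¬ M.rk (C.erase x) < ((C.erase x).card : ℤ) := by
        intro hcon
        have hmem : C.erase x ∈ T := Finset.mem_filter.mpr
          ⟨Finset.mem_powerset.mpr ((Finset.erase_subset x C).trans hCX), hcon⟩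
        have := hmin _ hmem
        omega
      push_neg at hnd
      have hub := M.rk_le_card (C.erase x) ((Finset.erase_subset x C).trans hCE)
      rw [hce] at hnd hub
      omega
    obtain ⟨x0, hx0⟩ := Finset.card_pos.mp hC1
    have hrkC : M.rk C = (C.card : ℤ) - 1 := by
      have h1 := hind x0 hx0
      have h2 := M.rk_mono (C.erase x0) C (Finset.erase_subset x0 C) hCE
      omega
    have hCcyc : ∀ x ∈ C, M.rk (C.erase x) = M.rk C := fun x hxC => by
      rw [hind x hxC, hrkC]
    have hrkCk : M.rk C < M.rk M.E := lt_of_le_of_lt (M.rk_mono C X hCX hX) hlt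
    have hFE : M.cl C ⊆ M.E := Finset.filter_subset _ _
    have hCF : C ⊆ M.cl C := by
      intro y hy
      rw [M.mem_cl_iff]
      exact ⟨hCE hy, by rw [Finset.insert_eq_self.mpr hy]⟩
    have hmemF : ∀ y ∈ M.cl C, M.rk (insert y C) = M.rk C := fun y hy =>
      ((M.mem_cl_iff).mp hy).2
    have hrkF : M.rk (M.cl C) = M.rk C := by
      have := M.rk_union_eq_of_forall (M.cl C) hCE hFE hmemF
      rwa [Finset.union_eq_right.mpr hCF] at this
    have hFcyc : M.Cyclic (M.cl C) := by
      intro x hxF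
      refine le_antisymm (M.rk_mono _ _ (Finset.erase_subset x (M.cl C)) hFE) ?_
      have hsub : C.erase x ⊆ (M.cl C).erase x := Finset.erase_subset_erase x hCF
      have hceq : M.rk (C.erase x) = M.rk C := by
        by_cases hxC : x ∈ C
        · exact hCcyc x hxC
        · rw [Finset.erase_eq_of_notMem hxC]
      calc M.rk (M.cl C) = M.rk (C.erase x) := by rw [hceq, hrkF]
        _ ≤ M.rk ((M.cl C).erase x) :=
            M.rk_mono _ _ hsub ((Finset.erase_subset x (M.cl C)).trans hFE)
    have hFflat : M.cl (M.cl C) = M.cl C := by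
      apply Finset.Subset.antisymm
      · intro y hy
        rw [M.mem_cl_iff] at hy
        obtain ⟨hyE, hyr⟩ := hy
        rw [M.mem_cl_iff]
        refine ⟨hyE, ?_⟩
        refine le_antisymm ?_
          (M.rk_mono C (insert y C) (Finset.subset_insert y C) (Finset.insert_subset hyE hCE))
        calc M.rk (insert y C) ≤ M.rk (insert y (M.cl C)) :=
              M.rk_mono _ _ (Finset.insert_subset_insert y hCF) (Finset.insert_subset hyE hFE)
          _ = M.rk (M.cl C) := hyr
          _ = M.rk C := hrkF
      · intro y hy
        rw [M.mem_cl_iff]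
        exact ⟨hFE hy, by rw [Finset.insert_eq_self.mpr hy]⟩
    have hFZ : M.cl C ∈ M.Z := ⟨hFE, hFcyc, hFflat⟩
    rw [hZ] at hFZ
    simp only [Set.mem_insert_iff, Set.mem_singleton_iff] at hFZ
    rcases hFZ with hF0 | hFE'
    · rw [hF0] at hCF
      exact absurd (hCF hx0) (Finset.notMem_empty x0)
    · rw [hFE'] at hrkF
      omega
  exact ⟨⟨h12, h21⟩, ⟨h23, h32⟩⟩
end

section
/- Let F be a field, let E be a finite index set, and let G be a matrix over F with columns indexed by E and rank(G) ≥ 1. Then the minimum Hamming weight of a nonzero vector in the row space of G equals min{|Y| : Y ⊆ E, rank(G(E \ Y)) < rank(G)}, where G(X) denotes the submatrix of G consisting of the columns indexed by X. -/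
/-!
A nonzero codeword `v` supported inside `Y` is the same thing as a nonzero vector of the row space
killed by restriction to the columns `E \ Y`, and by rank–nullity such a vector exists exactly when
that restriction drops the rank. So the support of a codeword `v` is a rank-dropping set of size
`wt(v)`, and every rank-dropping set contains the support of a nonzero codeword; the two minima agree.
-/

/-- The rank of the submatrix of `G` consisting of the columns indexed by `S`. -/
noncomputable def colRank {K : Type} [Field K] {ι E : Type} [Fintype ι] [Fintype E]
    (G : Matrix ι E K) (S : Finset E) : ℕ :=
  (G.submatrix id (fun x : {e // e ∈ S} => (x : E))).rank

theorem Nat.sInf_eq_sInf_of_subset_of_forall_exists_le {s t : Set ℕ} (hst : s ⊆ t)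
    (h : ∀ b ∈ t, ∃ a ∈ s, a ≤ b) : sInf s = sInf t := by
  rcases t.eq_empty_or_nonempty with rfl | ht
  · rw [Set.subset_empty_iff.1 hst]
  obtain ⟨a, ha, hab⟩ := h _ (Nat.sInf_mem ht)
  exact le_antisymm ((Nat.sInf_le ha).trans hab) (Nat.sInf_le (hst (Nat.sInf_mem ⟨a, ha⟩)))

theorem Submodule.finrank_map_lt_iff_exists_mem_ker {K V W : Type*} [Field K] [AddCommGroup V]
    [Module K V] [AddCommGroup W] [Module K W] (p : Submodule K V) [FiniteDimensional K p]
    (f : V →ₗ[K] W) :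
    Module.finrank K (p.map f) < Module.finrank K p ↔ ∃ v ∈ p, v ≠ 0 ∧ f v = 0 := by
  have hdisj : Disjoint p (LinearMap.ker f) ↔ Module.finrank K p ≤ Module.finrank K (p.map f) := by
    refine ⟨fun h => ?_, p.disjoint_ker_of_finrank_le f⟩
    rw [← LinearMap.range_domRestrict,
      LinearMap.finrank_range_of_inj (LinearMap.injective_domRestrict_iff.2 h)]
  rw [← not_le, ← hdisj, LinearMap.disjoint_ker]
  push Not
  simp only [and_comm]

section ColRank

variable {K : Type} [Field K] {ι E : Type} [Fintype ι] [Fintype E]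

theorem colRank_eq_finrank_map_funLeft (G : Matrix ι E K) (S : Finset E) :
    colRank G S = Module.finrank K ((Submodule.span K (Set.range fun i => G i)).map
      (LinearMap.funLeft K K (Subtype.val : S → E))) := by
  rw [colRank, Matrix.rank_eq_finrank_span_row, Submodule.map_span, ← Set.range_comp]
  rfl

theorem colRank_lt_rank_iff (G : Matrix ι E K) (S : Finset E) :
    colRank G S < G.rank ↔
      ∃ v ∈ Submodule.span K (Set.range fun i => G i), v ≠ 0 ∧ ∀ e ∈ S, v e = 0 := by
  rw [colRank_eq_finrank_map_funLeft, Matrix.rank_eq_finrank_span_row, Matrix.row,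
    Submodule.finrank_map_lt_iff_exists_mem_ker]
  simp only [funext_iff, LinearMap.funLeft_apply, Pi.zero_apply, Subtype.forall]

theorem colRank_sdiff_lt_rank_iff [DecidableEq K] [DecidableEq E] (G : Matrix ι E K)
    (Y : Finset E) :
    colRank G (Finset.univ \ Y) < G.rank ↔
      ∃ v ∈ Submodule.span K (Set.range fun i => G i), v ≠ 0 ∧ ({e | v e ≠ 0} : Finset E) ⊆ Y := by
  simp only [colRank_lt_rank_iff, Finset.mem_sdiff, Finset.mem_univ, true_and, Finset.subset_iff,
    Finset.mem_filter]
  refine exists_congr fun v => and_congr_right fun _ => and_congr_right fun _ => ?_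
  exact forall_congr' fun e => not_imp_comm

end ColRank

theorem stmt12_general {K : Type} [Field K] [DecidableEq K] {ι E : Type}
    [Fintype ι] [Fintype E] [DecidableEq E]
    (G : Matrix ι E K) :
    sInf {w : ℕ | ∃ v ∈ Submodule.span K (Set.range fun i : ι => G i),
        v ≠ (0 : E → K) ∧ hammingNorm v = w} =
    sInf {m : ℕ | ∃ Y : Finset E,
        colRank G (Finset.univ \ Y) < G.rank ∧ Y.card = m} := by
  apply Nat.sInf_eq_sInf_of_subset_of_forall_exists_le
  · rintro _ ⟨v, hv, hne, rfl⟩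
    exact ⟨_, (colRank_sdiff_lt_rank_iff G _).2 ⟨v, hv, hne, subset_rfl⟩, rfl⟩
  · rintro _ ⟨Y, hY, rfl⟩
    obtain ⟨v, hv, hne, hsupp⟩ := (colRank_sdiff_lt_rank_iff G Y).1 hY
    exact ⟨_, ⟨v, hv, hne, rfl⟩, Finset.card_le_card hsupp⟩

/-- The minimum Hamming weight of a nonzero vector in the row space of `G` equals
`min {|Y| : Y ⊆ E, rank(G(E \ Y)) < rank(G)}`. -/
theorem stmt12 {K : Type} [Field K] [DecidableEq K] {ι E : Type}
    [Fintype ι] [Fintype E] [DecidableEq E]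
    (G : Matrix ι E K) (hG : 1 ≤ G.rank) :
    sInf {w : ℕ | ∃ v ∈ Submodule.span K (Set.range fun i : ι => G i),
        v ≠ (0 : E → K) ∧ hammingNorm v = w} =
    sInf {m : ℕ | ∃ Y : Finset E,
        colRank G (Finset.univ \ Y) < G.rank ∧ Y.card = m} :=
  stmt12_general G
end
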